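/- Fix n ≥ 2 and 2 ≤ m ≤ n. The map deleting the first letter n of π is a bijection from the set of permutations of [n] avoiding {1342, 1423} with π_1 = n such that n, n-1, …, n-m+1 occur as a decreasing subsequence, onto the set of permutations of [n-1] avoiding {1342, 1423} such that n-1, n-2, …, n-m+1 occur as a decreasing subsequence. Moreover this map decreases the number of descents by exactly one. -/

import Mathlib

/-- The word `w` contains the pattern `p`: some subsequence of `w` is
order-isomorphic to `p`. -/
def ContainsPat (w p : List ℕ) : Prop :=
  ∃ s : List ℕ, s.Sublist w ∧ s.length = p.length ∧
    ∀ i j : ℕ, i < p.length → j < p.length → (s[i]! < s[j]! ↔ p[i]! < p[j]!)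

/-- The word `w` avoids the pattern `p`. -/
def AvoidsPat (w p : List ℕ) : Prop := ¬ ContainsPat w p

/-- `π` is the one-line notation of a permutation of `{1,…,n}`. -/
def IsPermList (n : ℕ) (π : List ℕ) : Prop :=
  π.Perm ((List.range n).map (· + 1))

/-- The number of descents of a word. -/
def descList (π : List ℕ) : ℕ :=
  ((List.range (π.length - 1)).filter (fun t => decide (π[t + 1]! < π[t]!))).length

/-! A letter `n` placed in front of a word over `[n-1]` cannot take part in an occurrence of
`1342` or `1423`, since both patterns start with an ascent; it is automatically the first of the
letters `n, n-1, …, n-m+1` to occur, and it creates exactly one descent. Hence prepending `n`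
is the inverse of deleting it. -/

def OccurDecreasing (π : List ℕ) (lo hi : ℕ) : Prop :=
  ∀ a b, lo ≤ a → a < b → b ≤ hi → π.idxOf b < π.idxOf a

lemma descList_cons_cons_of_lt {a b : ℕ} (l : List ℕ) (h : b < a) :
    descList (a :: b :: l) = descList (b :: l) + 1 := by
  unfold descList
  rw [show (a :: b :: l).length - 1 = (b :: l).length - 1 + 1 by simp,
    List.range_succ_eq_map, List.filter_cons, List.filter_map]
  simp [Function.comp_def, h, Nat.add_comm]

lemma ContainsPat.mono {w₁ w₂ p : List ℕ} (h : w₁.Sublist w₂) :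
    ContainsPat w₁ p → ContainsPat w₂ p := by
  rintro ⟨s, hs, hlen, hiso⟩
  exact ⟨s, hs.trans h, hlen, hiso⟩

/-- A letter larger than all of `w` can only play the role of a pattern's first letter, which is
impossible when the pattern starts with an ascent. -/
lemma ContainsPat.of_cons_of_forall_lt {a x y : ℕ} {w p : List ℕ} (hxy : x < y)
    (hw : ∀ z ∈ w, z < a) (h : ContainsPat (a :: w) (x :: y :: p)) :
    ContainsPat w (x :: y :: p) := by
  obtain ⟨s, hs, hlen, hiso⟩ := h
  rcases List.sublist_cons_iff.mp hs with hs | ⟨r, rfl, hr⟩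
  · exact ⟨s, hs, hlen, hiso⟩
  · obtain ⟨z, r, rfl⟩ := List.exists_cons_of_length_pos (by simp at hlen; omega : 0 < r.length)
    have haz : a < z := by simpa using (hiso 0 1 (by simp) (by simp)).mpr hxy
    exact absurd (hw z (hr.subset List.mem_cons_self)) haz.not_gt

lemma avoidsPat_cons_iff {a x y : ℕ} {w p : List ℕ} (hxy : x < y) (hw : ∀ z ∈ w, z < a) :
    AvoidsPat (a :: w) (x :: y :: p) ↔ AvoidsPat w (x :: y :: p) :=
  not_congr ⟨ContainsPat.of_cons_of_forall_lt hxy hw, ContainsPat.mono (List.sublist_cons_self a w)⟩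

lemma isPermList_cons_iff {n : ℕ} (hn : 0 < n) (σ : List ℕ) :
    IsPermList n (n :: σ) ↔ IsPermList (n - 1) σ := by
  obtain ⟨k, rfl⟩ : ∃ k, n = k + 1 := ⟨n - 1, by omega⟩
  have h : ((List.range (k + 1)).map (· + 1)).Perm ((k + 1) :: (List.range k).map (· + 1)) := by
    rw [List.range_succ, List.map_append]
    simp [List.perm_append_singleton]
  exact ⟨fun h₁ => (h₁.trans h).cons_inv, fun h₁ => (h₁.cons (k + 1)).trans h.symm⟩

lemma IsPermList.length_eq {n : ℕ} {σ : List ℕ} (h : IsPermList n σ) : σ.length = n :=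
  (List.Perm.length_eq h).trans (by simp)

lemma IsPermList.le_of_mem {n x : ℕ} {σ : List ℕ} (h : IsPermList n σ) (hx : x ∈ σ) : x ≤ n := by
  obtain ⟨i, hi, rfl⟩ := List.mem_map.mp (h.subset hx)
  simp at hi
  omega

lemma occurDecreasing_cons_iff (n lo : ℕ) (σ : List ℕ) :
    OccurDecreasing (n :: σ) lo n ↔ OccurDecreasing σ lo (n - 1) := by
  constructor
  · intro h a b ha hab hb
    have := h a b ha hab (by omega)
    rw [List.idxOf_cons_ne σ (by omega : n ≠ b), List.idxOf_cons_ne σ (by omega : n ≠ a)] at this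
    omega
  · intro h a b ha hab hb
    rw [List.idxOf_cons_ne σ (by omega : n ≠ a)]
    rcases hb.lt_or_eq with hb | rfl
    · rw [List.idxOf_cons_ne σ (by omega : n ≠ b)]
      exact Nat.succ_lt_succ (h a b ha hab (by omega))
    · rw [List.idxOf_cons_self]
      omega

lemma cons_max_iff {n : ℕ} (hn : 0 < n) (lo : ℕ) (σ : List ℕ) :
    (IsPermList n (n :: σ) ∧ AvoidsPat (n :: σ) [1,3,4,2] ∧ AvoidsPat (n :: σ) [1,4,2,3] ∧
      (n :: σ)[0]! = n ∧ OccurDecreasing (n :: σ) lo n) ↔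
    (IsPermList (n - 1) σ ∧ AvoidsPat σ [1,3,4,2] ∧ AvoidsPat σ [1,4,2,3] ∧
      OccurDecreasing σ lo (n - 1)) := by
  rw [isPermList_cons_iff hn, occurDecreasing_cons_iff, List.getElem!_cons_zero]
  refine and_congr_right fun hσ => ?_
  have hlt : ∀ z ∈ σ, z < n := fun z hz => by have := hσ.le_of_mem hz; omega
  rw [avoidsPat_cons_iff (by norm_num) hlt, avoidsPat_cons_iff (by norm_num) hlt]
  simp only [true_and]

lemma bijOn_tail_image_cons {α : Type*} (a : α) (T : Set (List α)) :
    Set.BijOn List.tail ((a :: ·) '' T) T := by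
  refine ⟨?_, ?_, fun σ hσ => ⟨a :: σ, ⟨σ, hσ, rfl⟩, rfl⟩⟩
  · rintro _ ⟨σ, hσ, rfl⟩
    exact hσ
  · rintro _ ⟨σ, -, rfl⟩ _ ⟨τ, -, rfl⟩ h
    simp_all

lemma eq_cons_tail_of_getElem!_zero {l : List ℕ} {a : ℕ} (hl : l ≠ []) (h : l[0]! = a) :
    l = a :: l.tail := by
  cases l with
  | nil => contradiction
  | cons x t => simp_all

theorem stmt12_general (n m : ℕ) (hn : 2 ≤ n) :
    Set.BijOn (fun π : List ℕ => π.tail)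
      {π : List ℕ | IsPermList n π ∧ AvoidsPat π [1,3,4,2] ∧ AvoidsPat π [1,4,2,3] ∧
        π[0]! = n ∧ ∀ a b, n - m + 1 ≤ a → a < b → b ≤ n → π.idxOf b < π.idxOf a}
      {σ : List ℕ | IsPermList (n - 1) σ ∧ AvoidsPat σ [1,3,4,2] ∧
        AvoidsPat σ [1,4,2,3] ∧
        ∀ a b, n - m + 1 ≤ a → a < b → b ≤ n - 1 → σ.idxOf b < σ.idxOf a} ∧
    ∀ π ∈ {π : List ℕ | IsPermList n π ∧ AvoidsPat π [1,3,4,2] ∧ AvoidsPat π [1,4,2,3] ∧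
        π[0]! = n ∧ ∀ a b, n - m + 1 ≤ a → a < b → b ≤ n → π.idxOf b < π.idxOf a},
      descList π = descList π.tail + 1 := by
  set T := {σ : List ℕ | IsPermList (n - 1) σ ∧ AvoidsPat σ [1,3,4,2] ∧
    AvoidsPat σ [1,4,2,3] ∧ OccurDecreasing σ (n - m + 1) (n - 1)}
  have hS : {π : List ℕ | IsPermList n π ∧ AvoidsPat π [1,3,4,2] ∧ AvoidsPat π [1,4,2,3] ∧
      π[0]! = n ∧ OccurDecreasing π (n - m + 1) n} = (n :: ·) '' T := by
    ext π
    constructor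
    · intro hπ
      have hπ_ne : π ≠ [] := List.ne_nil_of_length_pos (by rw [hπ.1.length_eq]; omega)
      have hπ_eq : π = n :: π.tail := eq_cons_tail_of_getElem!_zero hπ_ne hπ.2.2.2.1
      rw [hπ_eq] at hπ
      exact ⟨π.tail, (cons_max_iff (by omega) _ _).mp hπ, hπ_eq.symm⟩
    · rintro ⟨σ, hσ, rfl⟩
      exact (cons_max_iff (by omega) _ σ).mpr hσ
  suffices Set.BijOn List.tail ((n :: ·) '' T) T ∧
      ∀ π ∈ (n :: ·) '' T, descList π = descList π.tail + 1 by rwa [← hS] at this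
  refine ⟨bijOn_tail_image_cons n T, ?_⟩
  rintro _ ⟨σ, hσ, rfl⟩
  obtain ⟨y, s, rfl⟩ := List.exists_cons_of_length_pos (by rw [hσ.1.length_eq]; omega : 0 < σ.length)
  exact descList_cons_cons_of_lt s (by have := hσ.1.le_of_mem List.mem_cons_self; omega)

/-- For `2 ≤ m ≤ n`, deleting the first letter `n` is a bijection from
`{1342,1423}`-avoiders of `[n]` starting with `n` in which `n, n-1, …, n-m+1`
decrease, onto `{1342,1423}`-avoiders of `[n-1]` in which `n-1, …, n-m+1`
decrease; it lowers the number of descents by exactly one. -/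
theorem stmt12 (n m : ℕ) (hn : 2 ≤ n) (hm2 : 2 ≤ m) (hm : m ≤ n) :
    Set.BijOn (fun π : List ℕ => π.tail)
      {π : List ℕ | IsPermList n π ∧ AvoidsPat π [1,3,4,2] ∧ AvoidsPat π [1,4,2,3] ∧
        π[0]! = n ∧ ∀ a b, n - m + 1 ≤ a → a < b → b ≤ n → π.idxOf b < π.idxOf a}
      {σ : List ℕ | IsPermList (n - 1) σ ∧ AvoidsPat σ [1,3,4,2] ∧
        AvoidsPat σ [1,4,2,3] ∧
        ∀ a b, n - m + 1 ≤ a → a < b → b ≤ n - 1 → σ.idxOf b < σ.idxOf a} ∧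
    ∀ π ∈ {π : List ℕ | IsPermList n π ∧ AvoidsPat π [1,3,4,2] ∧ AvoidsPat π [1,4,2,3] ∧
        π[0]! = n ∧ ∀ a b, n - m + 1 ≤ a → a < b → b ≤ n → π.idxOf b < π.idxOf a},
      descList π = descList π.tail + 1 :=
  stmt12_general n m hn
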